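/- Let Γ be a finite simplicial graph, 𝒢 a collection of non-trivial groups indexed by V(Γ), and 𝒮 a collection of subgraphs of Γ. Let Ẋ denote the cone-off of X(Γ, 𝒢) over the collection {g⟨Λ⟩ : g ∈ Γ𝒢, Λ ∈ 𝒮}. If Λ ⊆ Γ is a subgraph whose intersection with every subgraph of 𝒮 is either empty or a complete graph, then the inclusion of ⟨Λ⟩ into Ẋ is a quasi-isometric embedding; more precisely, (1/clique(Γ))·d_X(x,y) ≤ d_Ẋ(x,y) ≤ d_X(x,y) for all vertices x, y ∈ ⟨Λ⟩. -/

import Mathlib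

/-- Word length distance on a group with respect to a generating set `S`. -/
noncomputable def wordDist {G : Type*} [Group G] (S : Set G) (g h : G) : ℕ :=
  sInf {n : ℕ | ∃ l : List G, l.length = n ∧ (∀ x ∈ l, x ∈ S ∨ x⁻¹ ∈ S) ∧ g⁻¹ * h = l.prod}

/-- The commutation relators defining a graph product. -/
def graphProductRels {V : Type*} (Γ : SimpleGraph V) (G : V → Type*) [∀ v, Group (G v)] :
    Set (Monoid.CoprodI G) :=
  {x | ∃ (u v : V) (a : G u) (b : G v), Γ.Adj u v ∧
    x = Monoid.CoprodI.of a * Monoid.CoprodI.of b * (Monoid.CoprodI.of a)⁻¹ *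
      (Monoid.CoprodI.of b)⁻¹}

/-- The graph product of the groups `G v` over the simplicial graph `Γ`. -/
def graphProduct {V : Type*} (Γ : SimpleGraph V) (G : V → Type*) [∀ v, Group (G v)] : Type _ :=
  Monoid.CoprodI G ⧸ Subgroup.normalClosure (graphProductRels Γ G)

instance {V : Type*} (Γ : SimpleGraph V) (G : V → Type*) [∀ v, Group (G v)] :
    Group (graphProduct Γ G) :=
  QuotientGroup.Quotient.group _

/-- The canonical morphism from a vertex group into the graph product. -/
def gpOf {V : Type*} (Γ : SimpleGraph V) (G : V → Type*) [∀ v, Group (G v)] (u : V) :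
    G u →* graphProduct Γ G :=
  (QuotientGroup.mk' _).comp Monoid.CoprodI.of

/-- The generating set of the graph product given by the union of (images of) the vertex
groups, with the identity removed. -/
def vertexGens {V : Type*} (Γ : SimpleGraph V) (G : V → Type*) [∀ v, Group (G v)] :
    Set (graphProduct Γ G) :=
  ⋃ u : V, (Set.range (gpOf Γ G u) \ {1})

/-- The parabolic subgroup `⟨Λ⟩` generated by the vertex groups of `Λ`. -/
def parabolic {V : Type*} (Γ : SimpleGraph V) (G : V → Type*) [∀ v, Group (G v)] (Λ : Set V) :
    Subgroup (graphProduct Γ G) :=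
  Subgroup.closure (⋃ u ∈ Λ, Set.range (gpOf Γ G u))

/-- The word metric on the graph product, with respect to the union of the vertex groups. -/
noncomputable def gpDist {V : Type*} (Γ : SimpleGraph V) (G : V → Type*) [∀ v, Group (G v)]
    (g h : graphProduct Γ G) : ℝ :=
  (wordDist (vertexGens Γ G) g h : ℝ)
/-- `a b c d` is an induced 4-cycle (induced square) of `Γ`, with diagonals `(a,c)` and `(b,d)`. -/
def IsInducedSquare {V : Type*} (Γ : SimpleGraph V) (a b c d : V) : Prop :=
  Γ.Adj a b ∧ Γ.Adj b c ∧ Γ.Adj c d ∧ Γ.Adj d a ∧ ¬Γ.Adj a c ∧ ¬Γ.Adj b d ∧ a ≠ c ∧ b ≠ d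

/-- A set of vertices is square-complete if every induced square of `Γ` having two opposite
vertices in it lies entirely in it. -/
def SquareComplete {V : Type*} (Γ : SimpleGraph V) (Λ : Set V) : Prop :=
  ∀ a b c d, IsInducedSquare Γ a b c d → a ∈ Λ → c ∈ Λ → b ∈ Λ ∧ d ∈ Λ

/-- `Λ` contains an induced square of `Γ`. -/
def HasInducedSquareIn {V : Type*} (Γ : SimpleGraph V) (Λ : Set V) : Prop :=
  ∃ a b c d, IsInducedSquare Γ a b c d ∧ a ∈ Λ ∧ b ∈ Λ ∧ c ∈ Λ ∧ d ∈ Λ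

/-- A minsquare subgraph: minimal among square-complete subgraphs containing an induced square. -/
def IsMinsquare {V : Type*} (Γ : SimpleGraph V) (Λ : Set V) : Prop :=
  SquareComplete Γ Λ ∧ HasInducedSquareIn Γ Λ ∧
    ∀ Λ' ⊆ Λ, SquareComplete Γ Λ' → HasInducedSquareIn Γ Λ' → Λ' = Λ

/-- A set of vertices spanning a complete subgraph. -/
def IsCompleteSet {V : Type*} (Γ : SimpleGraph V) (S : Set V) : Prop :=
  ∀ a ∈ S, ∀ b ∈ S, a ≠ b → Γ.Adj a b
/-- The Cayley graph of a group with respect to a set `S` of generators. -/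
def cayley {G : Type*} [Group G] (S : Set G) : SimpleGraph G where
  Adj x y := x ≠ y ∧ (x⁻¹ * y ∈ S ∨ y⁻¹ * x ∈ S)
  symm := ⟨by rintro x y ⟨h1, h2⟩; exact ⟨h1.symm, h2.symm⟩⟩
  loopless := ⟨fun x h => h.1 rfl⟩

/-- A connected graph is Gromov hyperbolic: there is `δ ≥ 0` such that all of its geodesic
triangles are `δ`-thin, i.e. every vertex on a geodesic between `x` and `y` is at distance at
most `δ` from a vertex lying on a geodesic from `x` to `z` or on a geodesic from `y` to `z`. -/
def GraphHyperbolic {X : Type*} (G : SimpleGraph X) : Prop :=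
  ∃ δ : ℕ, ∀ x y z p : X, G.dist x p + G.dist p y = G.dist x y →
    ∃ q : X, (G.dist x q + G.dist q z = G.dist x z ∨ G.dist y q + G.dist q z = G.dist y z) ∧
      G.dist p q ≤ δ
/-- The clique number of `Γ`: the maximal number of vertices of a complete subgraph. -/
noncomputable def cliqueNum {V : Type*} (Γ : SimpleGraph V) : ℕ :=
  sSup {n | ∃ s : Finset V, Γ.IsNClique n s}

/-- The Hausdorff distance between `A` and `B` in the graph metric of `G` is at most `C`. -/
def HausdorffLEN {X : Type*} (G : SimpleGraph X) (A B : Set X) (C : ℕ) : Prop :=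
  (∀ a ∈ A, ∃ b ∈ B, G.dist a b ≤ C) ∧ (∀ b ∈ B, ∃ a ∈ A, G.dist a b ≤ C)

/-- The cone-off of a graph over a collection `Ps` of sets of vertices: an edge is added between
any two distinct vertices lying in a common member of `Ps`. -/
def coneOff {X : Type*} (G : SimpleGraph X) (Ps : Set (Set X)) : SimpleGraph X where
  Adj x y := x ≠ y ∧ (G.Adj x y ∨ ∃ P ∈ Ps, x ∈ P ∧ y ∈ P)
  symm := ⟨by
    rintro x y ⟨h, h2 | ⟨P, hP, hx, hy⟩⟩
    · exact ⟨h.symm, Or.inl h2.symm⟩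
    · exact ⟨h.symm, Or.inr ⟨P, hP, hy, hx⟩⟩⟩
  loopless := ⟨fun x h => h.1 rfl⟩

/-!
The retraction `r : Γ𝒢 → ⟨Λ⟩` killing the vertex groups outside `Λ` fixes `⟨Λ⟩` and maps a coset
`g⟨T⟩` into `r(g)⟨Λ ∩ T⟩`. When `Λ ∩ T` is complete, `⟨Λ ∩ T⟩` is a product of pairwise commuting
vertex groups, so it has diameter at most `clique(Γ)` in `X`; an edge of `X` is the case where `T`
is a single vertex. Hence `r` is `clique(Γ)`-Lipschitz from `Ẋ` to `X`, which gives the lower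
bound; the upper bound holds because `X` is a subgraph of `Ẋ`.
-/

namespace SimpleGraph

variable {X Y : Type*} {G : SimpleGraph X} {H : SimpleGraph Y}

theorem Hom.dist_le (f : G →g H) {u v : X} (h : G.Reachable u v) :
    H.dist (f u) (f v) ≤ G.dist u v := by
  obtain ⟨p, hp⟩ := h.exists_walk_length_eq_dist
  exact hp ▸ p.length_map f ▸ SimpleGraph.dist_le (p.map f)

theorem Iso.dist_eq (φ : G ≃g H) (u v : X) : H.dist (φ u) (φ v) = G.dist u v := by
  by_cases h : G.Reachable u v
  · refine le_antisymm (φ.toHom.dist_le h) ?_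
    simpa using φ.symm.toHom.dist_le (φ.reachable_iff.mpr h)
  · rw [dist_eq_zero_of_not_reachable h,
      dist_eq_zero_of_not_reachable (mt φ.reachable_iff.mp h)]

theorem dist_le_mul_length_of_forall_adj (hH : H.Connected) {f : X → Y} {C : ℕ}
    (hf : ∀ p q, G.Adj p q → H.dist (f p) (f q) ≤ C) {x y : X} (w : G.Walk x y) :
    H.dist (f x) (f y) ≤ C * w.length := by
  induction w with
  | nil => simp
  | cons hadj w ih =>
    rw [Walk.length_cons, mul_add_one, add_comm]
    exact hH.dist_triangle.trans (add_le_add (hf _ _ hadj) ih)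

theorem dist_le_mul_dist_of_forall_adj (hH : H.Connected) {f : X → Y} {C : ℕ}
    (hf : ∀ p q, G.Adj p q → H.dist (f p) (f q) ≤ C) {x y : X} (hxy : G.Reachable x y) :
    H.dist (f x) (f y) ≤ C * G.dist x y := by
  obtain ⟨w, hw⟩ := hxy.exists_walk_length_eq_dist
  exact hw ▸ dist_le_mul_length_of_forall_adj hH hf w

theorem le_coneOff (Ps : Set (Set X)) : G ≤ coneOff G Ps :=
  fun _ _ h => ⟨h.ne, Or.inl h⟩

end SimpleGraph

section Cayley

open SimpleGraph

variable {Gp : Type*} [Group Gp] (S : Set Gp)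

theorem cayley_eq_mulCayley : cayley S = mulCayley S := by
  ext x y
  exact (mulCayley_adj S x y).symm

def cayleyMulLeft (g : Gp) : cayley S ≃g cayley S where
  toEquiv := Equiv.mulLeft g
  map_rel_iff' := by
    rw [cayley_eq_mulCayley]
    exact mulCayley_adj_mul_iff_right

@[simp]
theorem cayleyMulLeft_apply (g x : Gp) : cayleyMulLeft S g x = g * x := rfl

theorem cayley_dist_mul_left (g x y : Gp) :
    (cayley S).dist (g * x) (g * y) = (cayley S).dist x y :=
  (cayleyMulLeft S g).dist_eq x y

theorem cayley_dist_eq_dist_one (x y : Gp) :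
    (cayley S).dist x y = (cayley S).dist 1 (x⁻¹ * y) := by
  rw [← cayley_dist_mul_left S x 1, mul_one, mul_inv_cancel_left]

theorem cayley_connected_of_closure_eq_top (hS : Subgroup.closure S = ⊤) :
    (cayley S).Connected := by
  have reach_one : ∀ z : Gp, (cayley S).Reachable 1 z := by
    intro z
    have hz : z ∈ Subgroup.closure S := hS ▸ Subgroup.mem_top z
    induction hz using Subgroup.closure_induction with
    | mem s hs =>
      by_cases h1 : (1 : Gp) = s
      · exact h1 ▸ Reachable.refl 1
      · exact Adj.reachable ⟨h1, Or.inl (by simpa using hs)⟩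
    | one => exact Reachable.refl 1
    | mul a b _ _ ha hb =>
      exact ha.trans (by simpa using hb.map (cayleyMulLeft S a).toHom)
    | inv a _ ha =>
      have h : (cayley S).Reachable a⁻¹ 1 := by simpa using ha.map (cayleyMulLeft S a⁻¹).toHom
      exact h.symm
  exact ⟨fun x y => by simpa using (reach_one (x⁻¹ * y)).map (cayleyMulLeft S x).toHom⟩

variable {S}

theorem cayley_dist_one_mul_le (hconn : (cayley S).Connected) (a b : Gp) :
    (cayley S).dist 1 (a * b) ≤ (cayley S).dist 1 a + (cayley S).dist 1 b := by
  calc (cayley S).dist 1 (a * b) ≤ (cayley S).dist 1 a + (cayley S).dist a (a * b) :=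
        hconn.dist_triangle
    _ = (cayley S).dist 1 a + (cayley S).dist 1 b := by
        rw [cayley_dist_eq_dist_one S a, inv_mul_cancel_left]

theorem cayley_dist_one_le_one {s : Gp} (hs : s ∈ S ∨ s = 1) : (cayley S).dist 1 s ≤ 1 := by
  rcases hs with hs | rfl
  · by_cases h1 : (1 : Gp) = s
    · simp [← h1]
    · have hadj : (cayley S).Adj 1 s := ⟨h1, Or.inl (by simpa using hs)⟩
      exact (dist_eq_one_iff_adj.mpr hadj).le
  · simp

theorem cayley_dist_one_noncommProd_le (hconn : (cayley S).Connected) {ι : Type*}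
    [DecidableEq ι] (s : Finset ι) (F : ι → Gp)
    (comm : (s : Set ι).Pairwise (Function.onFun Commute F)) (hF : ∀ i ∈ s, F i ∈ S ∨ F i = 1) :
    (cayley S).dist 1 (s.noncommProd F comm) ≤ s.card := by
  induction s using Finset.induction_on with
  | empty => simp
  | insert a s ha ih =>
    rw [Finset.noncommProd_insert_of_notMem _ _ _ _ ha, Finset.card_insert_of_notMem ha,
      add_comm]
    exact (cayley_dist_one_mul_le hconn _ _).trans (add_le_add
      (cayley_dist_one_le_one (hF a (Finset.mem_insert_self a s)))
      (ih _ fun i hi => hF i (Finset.mem_insert_of_mem hi)))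

end Cayley

namespace graphProduct

variable {V : Type*} {Γ : SimpleGraph V} {G : V → Type*} [∀ v, Group (G v)]

theorem isCompleteSet_iff_isClique {K : Set V} : IsCompleteSet Γ K ↔ Γ.IsClique K :=
  Iff.rfl

theorem gpOf_commute {u v : V} (h : Γ.Adj u v) (a : G u) (b : G v) :
    Commute (gpOf Γ G u a) (gpOf Γ G v b) := by
  rw [← commutatorElement_eq_one_iff_commute, commutatorElement_def]
  exact (QuotientGroup.eq_one_iff _).mpr
    (Subgroup.subset_normalClosure ⟨u, v, a, b, h, rfl⟩)

def lift {H : Type*} [Group H] (φ : ∀ u, G u →* H)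
    (hφ : ∀ u v, Γ.Adj u v → ∀ (a : G u) (b : G v), Commute (φ u a) (φ v b)) :
    graphProduct Γ G →* H :=
  QuotientGroup.lift _ (Monoid.CoprodI.lift φ) <| Subgroup.normalClosure_le_normal <| by
    rintro _ ⟨u, v, a, b, h, rfl⟩
    simp [(hφ u v h a b).eq]

@[simp]
theorem lift_gpOf {H : Type*} [Group H] (φ : ∀ u, G u →* H)
    (hφ : ∀ u v, Γ.Adj u v → ∀ (a : G u) (b : G v), Commute (φ u a) (φ v b)) (u : V) (a : G u) :
    lift φ hφ (gpOf Γ G u a) = φ u a :=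
  Monoid.CoprodI.lift_of φ a

theorem closure_iUnion_range_gpOf {ι : Type*} (f : ι → V) :
    Subgroup.closure (⋃ i, Set.range (gpOf Γ G (f i))) = ⨆ i, (gpOf Γ G (f i)).range := by
  simp only [Subgroup.closure_iUnion, ← MonoidHom.coe_range, Subgroup.closure_eq]

theorem parabolic_eq_iSup (Λ : Set V) : parabolic Γ G Λ = ⨆ u : Λ, (gpOf Γ G u).range := by
  rw [parabolic, Set.biUnion_eq_iUnion, closure_iUnion_range_gpOf]

variable (Γ G) in
theorem closure_vertexGens : Subgroup.closure (vertexGens Γ G) = ⊤ := by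
  have lift_gpOf_eq_mk : Monoid.CoprodI.lift (gpOf Γ G) = QuotientGroup.mk' _ :=
    Monoid.CoprodI.ext_hom _ _ fun _ => rfl
  rw [vertexGens, ← Set.iUnion_sdiff, Subgroup.closure_sdiff_one]
  refine (closure_iUnion_range_gpOf id).trans ?_
  exact (Monoid.CoprodI.range_eq_iSup (f := gpOf Γ G)).symm.trans
    (lift_gpOf_eq_mk ▸ QuotientGroup.range_mk' _)

variable (Γ G) in
theorem cayley_vertexGens_connected : (cayley (vertexGens Γ G)).Connected :=
  cayley_connected_of_closure_eq_top _ (closure_vertexGens Γ G)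

theorem gpOf_mem_parabolic {u : V} {T : Set V} (hu : u ∈ T) (a : G u) :
    gpOf Γ G u a ∈ parabolic Γ G T :=
  Subgroup.subset_closure (Set.mem_iUnion₂.mpr ⟨u, hu, a, rfl⟩)

theorem gpOf_mem_vertexGens_or_eq_one (u : V) (a : G u) :
    gpOf Γ G u a ∈ vertexGens Γ G ∨ gpOf Γ G u a = 1 :=
  or_iff_not_imp_right.mpr fun h => Set.mem_iUnion.mpr ⟨u, Set.mem_range_self a, h⟩

theorem exists_mem_parabolic_singleton_of_mem_vertexGens {s : graphProduct Γ G}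
    (hs : s ∈ vertexGens Γ G) : ∃ u, s ∈ parabolic Γ G {u} := by
  obtain ⟨u, ⟨a, rfl⟩, -⟩ := Set.mem_iUnion.mp hs
  exact ⟨u, gpOf_mem_parabolic (Set.mem_singleton u) a⟩

open scoped Classical in
noncomputable def retraction (Λ : Set V) : graphProduct Γ G →* graphProduct Γ G :=
  lift (fun u => if u ∈ Λ then gpOf Γ G u else 1) fun u v h a b => by
    by_cases hu : u ∈ Λ <;> by_cases hv : v ∈ Λ <;> simp [hu, hv, gpOf_commute h a b]

theorem retraction_gpOf_of_mem {Λ : Set V} {u : V} (hu : u ∈ Λ) (a : G u) :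
    retraction Λ (gpOf Γ G u a) = gpOf Γ G u a := by
  simp [retraction, hu]

theorem retraction_gpOf_of_notMem {Λ : Set V} {u : V} (hu : u ∉ Λ) (a : G u) :
    retraction Λ (gpOf Γ G u a) = 1 := by
  simp [retraction, hu]

theorem retraction_eq_self {Λ : Set V} {x : graphProduct Γ G} (hx : x ∈ parabolic Γ G Λ) :
    retraction Λ x = x := by
  refine MonoidHom.eqOn_closure (g := MonoidHom.id _) ?_ hx
  intro _ hy
  obtain ⟨u, hu, a, rfl⟩ := Set.mem_iUnion₂.mp hy
  exact retraction_gpOf_of_mem hu a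

theorem retraction_mem_parabolic_inter {Λ T : Set V} {x : graphProduct Γ G}
    (hx : x ∈ parabolic Γ G T) : retraction Λ x ∈ parabolic Γ G (Λ ∩ T) := by
  suffices (parabolic Γ G T).map (retraction Λ) ≤ parabolic Γ G (Λ ∩ T) from
    this (Subgroup.mem_map_of_mem _ hx)
  rw [parabolic, MonoidHom.map_closure, Subgroup.closure_le]
  rintro _ ⟨_, hy, rfl⟩
  obtain ⟨u, hu, a, rfl⟩ := Set.mem_iUnion₂.mp hy
  by_cases huΛ : u ∈ Λ
  · rw [retraction_gpOf_of_mem huΛ]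
    exact gpOf_mem_parabolic (Set.mem_inter huΛ hu) a
  · rw [retraction_gpOf_of_notMem huΛ]
    exact one_mem _

theorem card_le_cliqueNum [Finite V] {s : Finset V} (hs : Γ.IsClique (s : Set V)) :
    s.card ≤ cliqueNum Γ :=
  le_csSup
    ⟨Nat.card V, fun _ ⟨t, ht⟩ => ht.card_eq ▸ Set.ncard_coe_finset t ▸ Set.ncard_le_card _⟩
    ⟨s, hs, rfl⟩

theorem cayley_dist_one_le_cliqueNum [Finite V] {K : Set V} (hK : IsCompleteSet Γ K)
    {g : graphProduct Γ G} (hg : g ∈ parabolic Γ G K) :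
    (cayley (vertexGens Γ G)).dist 1 g ≤ cliqueNum Γ := by
  classical
  have : Fintype K := Fintype.ofFinite K
  have hcomm : Pairwise fun i j : K => ∀ (a : G i) (b : G j),
      Commute (gpOf Γ G i a) (gpOf Γ G j b) :=
    fun i j hij => gpOf_commute (hK i i.2 j j.2 (Subtype.coe_ne_coe.mpr hij))
  rw [parabolic_eq_iSup, ← MonoidHom.noncommPiCoprod_range (hcomm := hcomm)] at hg
  obtain ⟨f, rfl⟩ := hg
  rw [MonoidHom.noncommPiCoprod_apply]
  calc _ ≤ (Finset.univ : Finset K).card := by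
        refine cayley_dist_one_noncommProd_le (cayley_vertexGens_connected Γ G) _ _ _ ?_
        exact fun i _ => gpOf_mem_vertexGens_or_eq_one (i : V) (f i)
    _ = K.toFinset.card := by rw [Finset.card_univ, Set.toFinset_card]
    _ ≤ cliqueNum Γ := card_le_cliqueNum (by rwa [Set.coe_toFinset, ← isCompleteSet_iff_isClique])

variable (Γ G) in
def parabolicCosets (S : Set (Set V)) : Set (Set (graphProduct Γ G)) :=
  {P | ∃ g : graphProduct Γ G, ∃ T ∈ S, P = (g * ·) '' (parabolic Γ G T : Set (graphProduct Γ G))}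

theorem exists_mem_parabolic_of_coneOff_adj {S : Set (Set V)} {p q : graphProduct Γ G}
    (h : (coneOff (cayley (vertexGens Γ G)) (parabolicCosets Γ G S)).Adj p q) :
    ∃ T, (T ∈ S ∨ T.Subsingleton) ∧ p⁻¹ * q ∈ parabolic Γ G T := by
  obtain ⟨-, ⟨-, hs | hs⟩ | ⟨_, ⟨g, T, hT, rfl⟩, ⟨a, ha, rfl⟩, ⟨b, hb, rfl⟩⟩⟩ := h
  · obtain ⟨u, hu⟩ := exists_mem_parabolic_singleton_of_mem_vertexGens hs
    exact ⟨{u}, Or.inr Set.subsingleton_singleton, hu⟩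
  · obtain ⟨u, hu⟩ := exists_mem_parabolic_singleton_of_mem_vertexGens hs
    exact ⟨{u}, Or.inr Set.subsingleton_singleton, by simpa using inv_mem hu⟩
  · refine ⟨T, Or.inl hT, ?_⟩
    simpa [mul_assoc] using mul_mem (inv_mem ha) hb

theorem dist_retraction_le_cliqueNum_of_coneOff_adj [Finite V] {S : Set (Set V)} {Λ : Set V}
    (hS : ∀ T ∈ S, IsCompleteSet Γ (Λ ∩ T)) {p q : graphProduct Γ G}
    (h : (coneOff (cayley (vertexGens Γ G)) (parabolicCosets Γ G S)).Adj p q) :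
    (cayley (vertexGens Γ G)).dist (retraction Λ p) (retraction Λ q) ≤ cliqueNum Γ := by
  obtain ⟨T, hT, hpq⟩ := exists_mem_parabolic_of_coneOff_adj h
  have hΛT : IsCompleteSet Γ (Λ ∩ T) :=
    hT.elim (hS T) fun hsub => isCompleteSet_iff_isClique.mpr <|
      SimpleGraph.IsClique.of_subsingleton (hsub.anti Set.inter_subset_right)
  rw [cayley_dist_eq_dist_one, ← map_inv, ← map_mul]
  exact cayley_dist_one_le_cliqueNum hΛT (retraction_mem_parabolic_inter hpq)

end graphProduct

theorem parabolic_qi_embedded_in_cone_off_general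
    {V : Type*} [Fintype V] (Γ : SimpleGraph V) (G : V → Type*)
    [∀ v, Group (G v)]
    (S : Set (Set V)) (Λ : Set V)
    (hΛ : ∀ T ∈ S, Λ ∩ T = ∅ ∨ IsCompleteSet Γ (Λ ∩ T)) :
    ∀ x ∈ (parabolic Γ G Λ : Set (graphProduct Γ G)),
      ∀ y ∈ (parabolic Γ G Λ : Set (graphProduct Γ G)),
        (cayley (vertexGens Γ G)).dist x y ≤
            cliqueNum Γ * (coneOff (cayley (vertexGens Γ G))
              {P | ∃ g : graphProduct Γ G, ∃ T ∈ S,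
                P = (g * ·) '' (parabolic Γ G T : Set (graphProduct Γ G))}).dist x y ∧
          (coneOff (cayley (vertexGens Γ G))
              {P | ∃ g : graphProduct Γ G, ∃ T ∈ S,
                P = (g * ·) '' (parabolic Γ G T : Set (graphProduct Γ G))}).dist x y ≤
            (cayley (vertexGens Γ G)).dist x y := by
  open graphProduct SimpleGraph in
  intro x hx y hy
  have hconn := cayley_vertexGens_connected Γ G
  have hreach := hconn.preconnected x y
  have hle := le_coneOff (G := cayley (vertexGens Γ G)) (parabolicCosets Γ G S)
  have hS : ∀ T ∈ S, IsCompleteSet Γ (Λ ∩ T) := fun T hT =>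
    (hΛ T hT).elim (fun h => h ▸ isCompleteSet_iff_isClique.mpr isClique_empty) id
  refine ⟨?_, hreach.dist_anti hle⟩
  have := dist_le_mul_dist_of_forall_adj hconn
    (fun _ _ h => dist_retraction_le_cliqueNum_of_coneOff_adj hS h) (hreach.mono hle)
  rwa [retraction_eq_self hx, retraction_eq_self hy] at this

/-- **(Lemma 4.4.)** Let `S` be a collection of subgraphs of `Γ` and `Ẋ` the cone-off of
`X(Γ, 𝒢)` over the cosets `g⟨S⟩`, `S ∈ 𝒮`. If `Λ ⊆ Γ` intersects every member of `𝒮` along an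
empty or complete subgraph, then `⟨Λ⟩` is quasi-isometrically embedded in `Ẋ`:
`(1/clique(Γ)) · d_X ≤ d_Ẋ ≤ d_X` on `⟨Λ⟩`. -/
theorem parabolic_qi_embedded_in_cone_off
    {V : Type*} [Fintype V] (Γ : SimpleGraph V) (G : V → Type*)
    [∀ v, Group (G v)] [∀ v, Nontrivial (G v)]
    (S : Set (Set V)) (Λ : Set V)
    (hΛ : ∀ T ∈ S, Λ ∩ T = ∅ ∨ IsCompleteSet Γ (Λ ∩ T)) :
    ∀ x ∈ (parabolic Γ G Λ : Set (graphProduct Γ G)),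
      ∀ y ∈ (parabolic Γ G Λ : Set (graphProduct Γ G)),
        (cayley (vertexGens Γ G)).dist x y ≤
            cliqueNum Γ * (coneOff (cayley (vertexGens Γ G))
              {P | ∃ g : graphProduct Γ G, ∃ T ∈ S,
                P = (g * ·) '' (parabolic Γ G T : Set (graphProduct Γ G))}).dist x y ∧
          (coneOff (cayley (vertexGens Γ G))
              {P | ∃ g : graphProduct Γ G, ∃ T ∈ S,
                P = (g * ·) '' (parabolic Γ G T : Set (graphProduct Γ G))}).dist x y ≤
            (cayley (vertexGens Γ G)).dist x y :=
  parabolic_qi_embedded_in_cone_off_general Γ G S Λ hΛ
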